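/- Let k be a field and R a commutative noetherian integral domain that is a k-algebra, and let N be a finitely generated torsion-free R-module. If R (as a module over itself) degenerates to N, then N is isomorphic to R as an R-module. -/

import Mathlib

/-!
Put `S = R ⊗[k] V` and `τ = 1 ⊗ t`. Then `S ⧸ τS ≅ R ⊗[k] (V ⧸ t) ≅ R`, and `τ` is a
nonzerodivisor on `S` (flatness of `R` over `k`) and on `Q` (flatness of `Q` over `V`). The map
`S ≅ S ⊗[R] R → Q` is therefore injective, and since `Q` is finitely generated its image
contains `τⁿQ` for one `n`; so `Q` is isomorphic to an ideal `I ∋ τⁿ` of `S` with `I ⧸ τI ≅ N`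
torsion-free over `R`. If `I ⊆ τS`, then `τ⁻¹I ≅ I` contains `τⁿ⁻¹` and we induct on `n`.
Otherwise `I` contains a nonzero `a ∈ R` (a power of the residue of an element of `I \ τS`);
for `τx ∈ I` the class of `τx` in `I ⧸ τI` is killed by `a`, as `a • τx = τ • ax`, so
`τx ∈ τI` and `x ∈ I`. Descending from `τⁿ` gives `1 ∈ I`. Hence `Q ≅ S` and
`N ≅ Q ⧸ τQ ≅ S ⧸ τS ≅ R`.
-/

open TensorProduct

noncomputable section

/-- `M` degenerates to `N` (Yoshino, Definition 2.1): there are a discrete valuation ring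
`(V, tV, k)` which is a `k`-algebra (with residue field `k`) and a finitely generated
`R ⊗_k V`-module `Q` such that (1) `Q` is flat as a `V`-module, (2) `Q/tQ ≅ N` as
`R`-modules, and (3) `Q[1/t] ≅ M ⊗_k V[1/t]` as `R ⊗_k V[1/t]`-modules; the last condition
is expressed by an `R ⊗_k V`-linear map `M ⊗_k V → Q` (where `M ⊗_k V` is the base change
`(R ⊗_k V) ⊗_R M`) whose kernel and cokernel are annihilated by powers of `t`, i.e. which
becomes an isomorphism after inverting `t`. -/
def Degenerates (k : Type) [Field k] (R : Type) [CommRing R] [Algebra k R]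
    (M : Type) [AddCommGroup M] [Module R M]
    (N : Type) [AddCommGroup N] [Module R N] : Prop :=
  ∃ (V : Type) (_ : CommRing V) (_ : IsDomain V) (_ : IsDiscreteValuationRing V)
    (_ : Algebra k V) (t : V),
    Irreducible t ∧
    Function.Bijective (algebraMap k (V ⧸ IsLocalRing.maximalIdeal V)) ∧
    ∃ (Q : Type) (_ : AddCommGroup Q) (_ : Module (R ⊗[k] V) Q),
      Module.Finite (R ⊗[k] V) Q ∧
      (letI : Module V Q := Module.compHom Q
         (Algebra.TensorProduct.includeRight : V →ₐ[k] R ⊗[k] V).toRingHom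
       Module.Flat V Q) ∧
      (letI : Module R (Q ⧸ (Ideal.span {((1:R) ⊗ₜ[k] t : R ⊗[k] V)} •
          (⊤ : Submodule (R ⊗[k] V) Q))) := Module.compHom _ (algebraMap R (R ⊗[k] V))
       Nonempty ((Q ⧸ (Ideal.span {((1:R) ⊗ₜ[k] t : R ⊗[k] V)} •
          (⊤ : Submodule (R ⊗[k] V) Q))) ≃ₗ[R] N)) ∧
      ∃ ξ : ((R ⊗[k] V) ⊗[R] M) →ₗ[R ⊗[k] V] Q,
        (∀ x ∈ LinearMap.ker ξ, ∃ n : ℕ, ((1:R) ⊗ₜ[k] t : R ⊗[k] V) ^ n • x = 0) ∧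
        (∀ q : Q, ∃ n : ℕ, ((1:R) ⊗ₜ[k] t : R ⊗[k] V) ^ n • q ∈ LinearMap.range ξ)



section TorsionFreeModulo

variable (R : Type*) {S : Type*} [CommRing R] [CommRing S] [Algebra R S] (τ : S)

-- `M ⧸ τM` is torsion-free over `R`, which acts through `algebraMap R S`.
def TorsionFreeModulo (M : Type*) [AddCommGroup M] [Module S M] : Prop :=
  ∀ (r : R) (m m' : M), r ≠ 0 → algebraMap R S r • m = τ • m' → ∃ m'', m = τ • m''

variable {R τ} {M M' : Type*} [AddCommGroup M] [Module S M] [AddCommGroup M'] [Module S M']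

theorem TorsionFreeModulo.of_linearEquiv (h : TorsionFreeModulo R τ M) (e : M ≃ₗ[S] M') :
    TorsionFreeModulo R τ M' := by
  intro r m m' hr hm
  obtain ⟨m'', hm''⟩ := h r (e.symm m) (e.symm m') hr (by rw [← map_smul, ← map_smul, hm])
  exact ⟨e m'', by rw [← map_smul, ← hm'', e.apply_symm_apply]⟩

theorem torsionFreeModulo_of_noZeroSMulDivisors
    [Module R (M ⧸ Ideal.span {τ} • (⊤ : Submodule S M))]
    [IsScalarTower R S (M ⧸ Ideal.span {τ} • (⊤ : Submodule S M))]
    [NoZeroSMulDivisors R (M ⧸ Ideal.span {τ} • (⊤ : Submodule S M))] :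
    TorsionFreeModulo R τ M := by
  have mem_iff (m : M) : m ∈ Ideal.span {τ} • (⊤ : Submodule S M) ↔ ∃ m', m = τ • m' := by
    simp [Submodule.ideal_span_singleton_smul, Submodule.mem_smul_pointwise_iff_exists, eq_comm]
  intro r m m' hr hm
  rw [← mem_iff, ← Submodule.Quotient.mk_eq_zero]
  have hr_mk : r • (Submodule.Quotient.mk m : M ⧸ Ideal.span {τ} • (⊤ : Submodule S M)) = 0 := by
    rw [← algebraMap_smul S r, ← Submodule.Quotient.mk_smul, Submodule.Quotient.mk_eq_zero,
      mem_iff]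
    exact ⟨m', hm⟩
  exact (NoZeroSMulDivisors.eq_zero_or_eq_zero_of_smul_eq_zero hr_mk).resolve_left hr

end TorsionFreeModulo

namespace Ideal

variable {R S : Type*} [CommRing R] [CommRing S] [Algebra R S] {τ : S}

theorem exists_algebraMap_mem_of_not_le_span [NoZeroDivisors R]
    (hsurj : Function.Surjective (algebraMap R (S ⧸ span {τ}))) {I : Ideal S}
    (hI : ¬ I ≤ span {τ}) {n : ℕ} (hn : τ ^ n ∈ I) : ∃ a : R, a ≠ 0 ∧ algebraMap R S a ∈ I := by
  obtain ⟨x, hxI, hxτ⟩ := SetLike.not_le_iff_exists.mp hI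
  obtain ⟨a, ha⟩ := hsurj (Quotient.mk _ x)
  rw [IsScalarTower.algebraMap_apply R S, Quotient.algebraMap_eq, Quotient.eq] at ha
  obtain ⟨z, hz⟩ := mem_span_singleton'.mp ha
  refine ⟨a ^ n, pow_ne_zero _ fun ha0 => hxτ ?_, ?_⟩
  · rw [ha0, map_zero, zero_sub] at hz
    rw [← neg_neg x, ← hz, ← neg_mul]
    exact mul_mem_left _ _ (mem_span_singleton_self τ)
  · -- `a = x + zτ` and `x ∈ I`, so `aⁿ ≡ (zτ)ⁿ ≡ 0` modulo `I`.
    have hdvd : x ∣ algebraMap R S a ^ n - (algebraMap R S a - x) ^ n := by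
      simpa using sub_dvd_pow_sub_pow (algebraMap R S a) (algebraMap R S a - x) n
    rw [map_pow, ← sub_add_cancel (algebraMap R S a ^ n) ((algebraMap R S a - x) ^ n)]
    refine add_mem (mem_of_dvd _ hdvd hxI) ?_
    rw [← hz, mul_pow]
    exact mul_mem_left _ _ hn

theorem eq_top_of_torsionFreeModulo (hτ : IsSMulRegular S τ) {I : Ideal S}
    (hI : TorsionFreeModulo R τ I) {a : R} (ha : a ≠ 0) (haI : algebraMap R S a ∈ I) {n : ℕ}
    (hn : τ ^ n ∈ I) : I = ⊤ := by
  have mem_of_mul_mem (x : S) (hx : τ * x ∈ I) : x ∈ I := by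
    obtain ⟨y, hy⟩ := hI a ⟨τ * x, hx⟩ ⟨algebraMap R S a * x, I.mul_mem_right x haI⟩ ha
      (Subtype.ext (by simp only [SetLike.val_smul, smul_eq_mul]; ring))
    rw [hτ (congrArg Subtype.val hy : τ * x = τ * y)]
    exact y.2
  have one_mem : ∀ k : ℕ, τ ^ k ∈ I → (1 : S) ∈ I := by
    intro k
    induction k with
    | zero => simp
    | succ k ih => exact fun h => ih (mem_of_mul_mem _ (by rwa [← pow_succ']))
  exact (eq_top_iff_one I).mpr (one_mem n hn)

def comapMulLeftEquiv (hτ : IsSMulRegular S τ) {I : Ideal S} (hI : I ≤ span {τ}) :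
    Submodule.comap (LinearMap.mulLeft S τ) I ≃ₗ[S] I :=
  LinearEquiv.ofBijective ((LinearMap.mulLeft S τ).submoduleComap I)
    ⟨fun x y hxy => Subtype.ext (hτ (congrArg Subtype.val hxy)), fun y => by
      obtain ⟨x, hx⟩ := mem_span_singleton'.mp (hI y.2)
      have hx' : τ * x = y := by rw [mul_comm, hx]
      exact ⟨⟨x, show τ * x ∈ I by rw [hx']; exact y.2⟩, Subtype.ext hx'⟩⟩

theorem nonempty_linearEquiv_self_of_pow_mem [NoZeroDivisors R] (hτ : IsSMulRegular S τ)
    (hsurj : Function.Surjective (algebraMap R (S ⧸ span {τ}))) :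
    ∀ {n : ℕ} {I : Ideal S}, τ ^ n ∈ I → TorsionFreeModulo R τ I → Nonempty (I ≃ₗ[S] S)
  | 0, I, hn, _ => by
    obtain rfl : I = ⊤ := (eq_top_iff_one I).mpr (by simpa using hn)
    exact ⟨Submodule.topEquiv⟩
  | n + 1, I, hn, hI => by
    by_cases hle : I ≤ span {τ}
    · have e := comapMulLeftEquiv hτ hle
      obtain ⟨e'⟩ := nonempty_linearEquiv_self_of_pow_mem hτ hsurj
        (I := Submodule.comap (LinearMap.mulLeft S τ) I)
        (by rwa [Submodule.mem_comap, LinearMap.mulLeft_apply, ← pow_succ'])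
        (hI.of_linearEquiv e.symm)
      exact ⟨e.symm.trans e'⟩
    · obtain ⟨a, ha, haI⟩ := exists_algebraMap_mem_of_not_le_span hsurj hle hn
      obtain rfl := eq_top_of_torsionFreeModulo hτ hI ha haI hn
      exact ⟨Submodule.topEquiv⟩

end Ideal

section

variable {S : Type*} [CommRing S] {τ : S} {Q : Type*} [AddCommGroup Q] [Module S Q]

theorem exists_ideal_pow_mem_linearEquiv (hQ : IsSMulRegular Q τ) {η : S →ₗ[S] Q}
    (hη : Function.Injective η) {n : ℕ} (hn : ∀ q, τ ^ n • q ∈ LinearMap.range η) :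
    ∃ I : Ideal S, τ ^ n ∈ I ∧ Nonempty (Q ≃ₗ[S] I) := by
  let ψ : Q →ₗ[S] S := (LinearEquiv.ofInjective η hη).symm.toLinearMap ∘ₗ
    (LinearMap.lsmul S Q (τ ^ n)).codRestrict (LinearMap.range η) hn
  have hηψ (q : Q) : η (ψ q) = τ ^ n • q :=
    congrArg Subtype.val ((LinearEquiv.ofInjective η hη).apply_symm_apply _)
  have hψ : Function.Injective ψ := fun q q' h =>
    hQ.pow n (show τ ^ n • q = τ ^ n • q' by rw [← hηψ, ← hηψ, h])
  refine ⟨LinearMap.range ψ, ⟨η 1, hη ?_⟩, ⟨LinearEquiv.ofInjective ψ hψ⟩⟩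
  rw [hηψ, ← map_smul, smul_eq_mul, mul_one]

theorem LinearMap.injective_of_ker_pow_smul_eq_zero {M : Type*} [AddCommGroup M] [Module S M]
    (hM : IsSMulRegular M τ) {f : M →ₗ[S] Q}
    (hker : ∀ x ∈ LinearMap.ker f, ∃ n : ℕ, τ ^ n • x = 0) : Function.Injective f := by
  rw [← LinearMap.ker_eq_bot, Submodule.eq_bot_iff]
  intro x hx
  obtain ⟨n, hn⟩ := hker x hx
  exact (hM.pow n).right_eq_zero_of_smul hn

theorem Submodule.exists_pow_smul_mem_of_finite [Module.Finite S Q] {N : Submodule S Q}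
    (h : ∀ q, ∃ n : ℕ, τ ^ n • q ∈ N) : ∃ n : ℕ, ∀ q, τ ^ n • q ∈ N := by
  classical
  obtain ⟨G, hG⟩ := Module.Finite.fg_top (R := S) (M := Q)
  choose e he using h
  refine ⟨G.sup e, fun q => ?_⟩
  have htop : (⊤ : Submodule S Q) ≤ N.comap (LinearMap.lsmul S Q (τ ^ G.sup e)) := by
    rw [← hG, Submodule.span_le]
    intro g hg
    rw [SetLike.mem_coe, Submodule.mem_comap, LinearMap.lsmul_apply,
      ← Nat.sub_add_cancel (G.le_sup hg), pow_add, mul_smul]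
    exact N.smul_mem _ (he g)
  exact htop Submodule.mem_top

end

section

variable {R S : Type*} [CommRing R] [CommRing S] [Algebra R S] {τ : S}
  {Q : Type*} [AddCommGroup Q] [Module S Q]

theorem nonempty_linearEquiv_of_torsionFreeModulo [NoZeroDivisors R] (hτ : IsSMulRegular S τ)
    (hsurj : Function.Surjective (algebraMap R (S ⧸ Ideal.span {τ})))
    (hQ : IsSMulRegular Q τ) (hQτ : TorsionFreeModulo R τ Q) {η : S →ₗ[S] Q}
    (hη : Function.Injective η) {n : ℕ} (hn : ∀ q, τ ^ n • q ∈ LinearMap.range η) :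
    Nonempty (Q ≃ₗ[S] S) := by
  obtain ⟨I, hnI, ⟨e⟩⟩ := exists_ideal_pow_mem_linearEquiv hQ hη hn
  obtain ⟨e'⟩ := Ideal.nonempty_linearEquiv_self_of_pow_mem hτ hsurj hnI (hQτ.of_linearEquiv e)
  exact ⟨e.trans e'⟩

theorem nonempty_quotient_linearEquiv_of_linearEquiv
    [Module R (Q ⧸ Ideal.span {τ} • (⊤ : Submodule S Q))]
    [IsScalarTower R S (Q ⧸ Ideal.span {τ} • (⊤ : Submodule S Q))]
    (φ : Q ≃ₗ[S] S) (e₀ : (S ⧸ Ideal.span {τ}) ≃ₐ[R] R) :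
    Nonempty ((Q ⧸ Ideal.span {τ} • (⊤ : Submodule S Q)) ≃ₗ[R] R) := by
  have hmap : (Ideal.span {τ} • ⊤ : Submodule S Q).map (φ : Q →ₗ[S] S) = Ideal.span {τ} := by
    rw [Submodule.map_smul'', Submodule.map_top, LinearEquiv.range, Ideal.smul_eq_mul,
      Ideal.mul_top]
  exact ⟨((Submodule.Quotient.equiv _ _ φ hmap).restrictScalars R).trans e₀.toLinearEquiv⟩

end

namespace Algebra.TensorProduct

variable {k A V : Type*} [CommRing k] [CommRing A] [Algebra k A] [CommRing V] [Algebra k V]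

theorem isSMulRegular_one_tmul [Module.Flat k A] {t : V} (ht : IsSMulRegular V t) :
    IsSMulRegular (A ⊗[k] V) ((1 : A) ⊗ₜ[k] t) := by
  have h : LinearMap.lTensor A (LinearMap.mulLeft k t) =
      LinearMap.mulLeft k ((1 : A) ⊗ₜ[k] t) := by
    ext a v
    simp
  have hinj :=
    Module.Flat.lTensor_preserves_injective_linearMap (M := A) (LinearMap.mulLeft k t) ht
  rwa [h] at hinj

def quotientSpanOneTmulEquiv {t : V}
    (h : Function.Bijective (algebraMap k (V ⧸ Ideal.span {t}))) :
    ((A ⊗[k] V) ⧸ Ideal.span {(1 : A) ⊗ₜ[k] t}) ≃ₐ[A] A :=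
  (Ideal.quotientEquivAlgOfEq A (I := Ideal.span {(1 : A) ⊗ₜ[k] t})
      (J := (Ideal.span {t}).map (includeRight : V →ₐ[k] A ⊗[k] V))
      (by rw [Ideal.map_span, Set.image_singleton, includeRight_apply])).trans <|
    (tensorQuotientEquiv (R := k) A V A (Ideal.span {t})).symm.trans <|
    (congr AlgEquiv.refl (AlgEquiv.ofBijective (Algebra.ofId k _) h).symm).trans <|
    Algebra.TensorProduct.rid k A A

end Algebra.TensorProduct

theorem isomorphic_of_degenerates_of_torsionFree_general
    (k : Type) [Field k] (R : Type) [CommRing R] [IsDomain R]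
    [Algebra k R]
    (N : Type) [AddCommGroup N] [Module R N]
    [NoZeroSMulDivisors R N]
    (hdeg : Degenerates k R R N) :
    Nonempty (N ≃ₗ[R] R) := by
  obtain ⟨V, _, _, _, _, t, ht, hres, Q, _, _, _, hflat, hN, ξ, hker, hcoker⟩ := hdeg
  set τ : R ⊗[k] V := (1 : R) ⊗ₜ[k] t
  let _ : Module V Q :=
    Module.compHom Q (Algebra.TensorProduct.includeRight : V →ₐ[k] R ⊗[k] V).toRingHom
  let _ : Module R (Q ⧸ Ideal.span {τ} • (⊤ : Submodule (R ⊗[k] V) Q)) :=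
    Module.compHom _ (algebraMap R (R ⊗[k] V))
  have _ : IsScalarTower R (R ⊗[k] V) (Q ⧸ Ideal.span {τ} • (⊤ : Submodule (R ⊗[k] V) Q)) :=
    .of_algebraMap_smul fun _ _ => rfl
  obtain ⟨e⟩ := hN
  have _ := e.injective.noZeroSMulDivisors _ (map_zero e) (map_smul e)
  rw [ht.maximalIdeal_eq] at hres
  let e₀ := Algebra.TensorProduct.quotientSpanOneTmulEquiv (A := R) hres
  have hsurj : Function.Surjective (algebraMap R ((R ⊗[k] V) ⧸ Ideal.span {τ})) :=
    fun x => ⟨e₀ x, by rw [← e₀.symm.commutes]; exact e₀.symm_apply_apply x⟩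
  have hτS : IsSMulRegular (R ⊗[k] V) τ :=
    Algebra.TensorProduct.isSMulRegular_one_tmul (IsSMulRegular.of_ne_zero ht.ne_zero)
  have _ : Module.Flat V Q := hflat
  have hτQ : IsSMulRegular Q τ :=
    Module.Flat.isSMulRegular_of_nonZeroDivisors (R := V)
      (mem_nonZeroDivisors_of_ne_zero ht.ne_zero)
  let ρ := TensorProduct.AlgebraTensorModule.rid R (R ⊗[k] V) (R ⊗[k] V)
  have hξ : Function.Injective ξ :=
    LinearMap.injective_of_ker_pow_smul_eq_zero (hτS.of_injective ρ ρ.injective) hker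
  have hrange : LinearMap.range (ξ ∘ₗ ρ.symm.toLinearMap) = LinearMap.range ξ :=
    LinearMap.range_comp_of_range_eq_top _ ρ.symm.range
  obtain ⟨n, hn⟩ := Submodule.exists_pow_smul_mem_of_finite hcoker
  obtain ⟨φ⟩ := nonempty_linearEquiv_of_torsionFreeModulo hτS hsurj hτQ
    torsionFreeModulo_of_noZeroSMulDivisors (hξ.comp ρ.symm.injective) (hrange ▸ hn)
  obtain ⟨ψ⟩ := nonempty_quotient_linearEquiv_of_linearEquiv φ e₀
  exact ⟨e.symm.trans ψ⟩

/-- **Yoshino, Proposition 3.2.** Let `R` be a commutative noetherian integral domain which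
is a `k`-algebra, and `N` a finitely generated torsion-free `R`-module.  If `R` degenerates
to `N`, then `N ≅ R`. -/
theorem isomorphic_of_degenerates_of_torsionFree
    (k : Type) [Field k] (R : Type) [CommRing R] [IsDomain R] [IsNoetherianRing R]
    [Algebra k R]
    (N : Type) [AddCommGroup N] [Module R N] [Module.Finite R N]
    [NoZeroSMulDivisors R N]
    (hdeg : Degenerates k R R N) :
    Nonempty (N ≃ₗ[R] R) :=
  isomorphic_of_degenerates_of_torsionFree_general k R N hdeg

end
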